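/- For m > 0 and m_s > 0, the series Σ_{n=0}^∞ B(2m + n, 2m_s) / (B(m, m_s) B(m + n, m_s) (m + n)) converges. -/
import Mathlib


open MeasureTheory ProbabilityTheory Real Filter Asymptotics

/-- Beta function `B(a,b) = Γ(a)Γ(b)/Γ(a+b)`. -/
noncomputable def Beta (a b : ℝ) : ℝ := Real.Gamma a * Real.Gamma b / Real.Gamma (a + b)

/-- Pochhammer symbol `(a)_n`. -/
noncomputable def poch (a : ℝ) (n : ℕ) : ℝ := (ascPochhammer ℝ n).eval a

/-- Gauss hypergeometric function `₂F₁` (series definition). -/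
noncomputable def hyp2F1 (a b c x : ℝ) : ℝ :=
  ∑' n : ℕ, poch a n * poch b n / (poch c n * (n.factorial : ℝ)) * x ^ n

/-- Generalized hypergeometric function `₃F₂` (series definition). -/
noncomputable def hyp3F2 (a1 a2 a3 b1 b2 x : ℝ) : ℝ :=
  ∑' n : ℕ, poch a1 n * poch a2 n * poch a3 n /
    (poch b1 n * poch b2 n * (n.factorial : ℝ)) * x ^ n

/-- Appell two-variable hypergeometric function `F₁` (series definition). -/
noncomputable def appellF1 (a b1 b2 c x y : ℝ) : ℝ :=
  ∑' p : ℕ × ℕ, poch a (p.1 + p.2) * poch b1 p.1 * poch b2 p.2 /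
    (poch c (p.1 + p.2) * (p.1.factorial : ℝ) * (p.2.factorial : ℝ)) * x ^ p.1 * y ^ p.2

/-- Digamma function `ψ = Γ'/Γ`. -/
noncomputable def digamma (x : ℝ) : ℝ := deriv Real.Gamma x / Real.Gamma x

/-- Fisher-Snedecor `𝓕` composite fading PDF with multipath parameter `m`,
shadowing parameter `ms` and mean power `γbar`. -/
noncomputable def fisherPDF (m ms γbar x : ℝ) : ℝ :=
  if 0 < x then
    m ^ m * (ms - 1) ^ ms * γbar ^ ms * x ^ (m - 1) /
      (Beta m ms * (m * x + (ms - 1) * γbar) ^ (m + ms))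
  else 0

/-- Unit-scale Fisher-Snedecor `𝓕` PDF `Λ^m t^(m-1)/(B(m,ms)(1+Λt)^(m+ms))`. -/
noncomputable def fisherPDFΛ (m ms Λ t : ℝ) : ℝ :=
  if 0 < t then Λ ^ m * t ^ (m - 1) / (Beta m ms * (1 + Λ * t) ^ (m + ms)) else 0

lemma Beta_pos_aux {a b : ℝ} (ha : 0 < a) (hb : 0 < b) : 0 < Beta a b := by
  unfold Beta
  exact div_pos (mul_pos (Real.Gamma_pos_of_pos ha) (Real.Gamma_pos_of_pos hb))
    (Real.Gamma_pos_of_pos (by linarith))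

lemma Beta_succ_aux {a b : ℝ} (ha : 0 < a) (hb : 0 < b) :
    Beta (a + 1) b = (a / (a + b)) * Beta a b := by
  unfold Beta
  have hab : (0:ℝ) < a + b := by linarith
  rw [show a + 1 + b = (a + b) + 1 by ring, Real.Gamma_add_one hab.ne',
    Real.Gamma_add_one ha.ne']
  have h1 := (Real.Gamma_pos_of_pos ha).ne'
  have h2 := (Real.Gamma_pos_of_pos hb).ne'
  have h3 := (Real.Gamma_pos_of_pos hab).ne'
  field_simp

/-- convergence of the series in the asymptotic capacity expression. -/
theorem asym_series_summable (m ms : ℝ) (hm : 0 < m) (hms : 0 < ms) :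
    Summable (fun n : ℕ =>
      Beta (2 * m + n) (2 * ms) / (Beta m ms * Beta (m + n) ms * (m + n))) := by
  set a : ℕ → ℝ :=
    fun n => Beta (2 * m + n) (2 * ms) / (Beta m ms * Beta (m + n) ms * (m + n)) with ha
  set p : ℝ := 1 + ms / 2 with hpdef
  have hp1 : (1:ℝ) ≤ p := by simp [hpdef]; positivity
  have hBm := Beta_pos_aux hm hms
  have hpos : ∀ n : ℕ, 0 < a n := by
    intro n
    have h1 : (0:ℝ) < 2 * m + n := by positivity
    have h2 : (0:ℝ) < m + n := by positivity
    exact div_pos (Beta_pos_aux h1 (by positivity))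
      (mul_pos (mul_pos hBm (Beta_pos_aux h2 hms)) h2)
  have hrec : ∀ n : ℕ, a (n + 1) =
      a n * (((2 * m + n) * (m + n + ms)) / ((2 * m + n + 2 * ms) * (m + n + 1))) := by
    intro n
    have h1 : (0:ℝ) < 2 * m + n := by positivity
    have h2 : (0:ℝ) < m + n := by positivity
    have hB1 := Beta_pos_aux h1 (show (0:ℝ) < 2 * ms by positivity)
    have hB2 := Beta_pos_aux h2 hms
    have e1 : (2 * m + ((n:ℝ) + 1)) = (2 * m + n) + 1 := by ring
    have e2 : (m + ((n:ℝ) + 1)) = (m + n) + 1 := by ring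
    simp only [ha]
    push_cast
    rw [e1, e2, Beta_succ_aux h1 (by positivity), Beta_succ_aux h2 hms]
    have d1 : (2 * m + (n:ℝ)) + 2 * ms ≠ 0 := by positivity
    have d2 : (m + (n:ℝ)) + ms ≠ 0 := by positivity
    have d3 : (m + (n:ℝ)) + 1 ≠ 0 := by positivity
    have d4 : (2 * m + (n:ℝ)) + 2 * ms ≠ 0 := by positivity
    field_simp
  -- polynomial coefficients from the expansion
  set B : ℝ := 1 + (3/2) * ms - ms^2 - m - (3/2) * m * ms with hBdef
  set C : ℝ := 2 * ms - ms^2 + 2 * m - 3 * m * ms - m * ms^2 - 2 * m^2 - m^2 * ms with hCdef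
  set N : ℕ := ⌈2 * (|B| + |C|) / ms⌉₊ + 1 with hNdef
  have hN : ∀ n : ℕ, N ≤ n →
      (2 * m + (n:ℝ)) * (m + n + ms) * ((n:ℝ) + 2) ≤
        ((n:ℝ) + 2 - p) * ((2 * m + n + 2 * ms) * (m + n + 1)) := by
    intro n hn
    have hx1 : (1:ℝ) ≤ (n:ℝ) := by
      have : 1 ≤ n := le_trans (by omega) hn
      exact_mod_cast this
    have hx2 : 2 * (|B| + |C|) / ms ≤ (n:ℝ) := by
      refine le_trans (Nat.le_ceil _) ?_
      have : (⌈2 * (|B| + |C|) / ms⌉₊ : ℝ) ≤ (n:ℝ) := by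
        exact_mod_cast le_trans (by omega : ⌈2 * (|B| + |C|) / ms⌉₊ ≤ N) hn
      exact this
    have hx3 : |B| + |C| ≤ ms / 2 * (n:ℝ) := by
      rw [div_le_iff₀ hms] at hx2
      nlinarith
    have key : ((n:ℝ) + 2 - p) * ((2 * m + n + 2 * ms) * (m + n + 1)) -
        (2 * m + (n:ℝ)) * (m + n + ms) * ((n:ℝ) + 2) =
        (ms / 2) * (n:ℝ)^2 + B * (n:ℝ) + C := by
      simp only [hpdef, hBdef, hCdef]; ring
    have t1 : (0:ℝ) ≤ (B + |B|) * n :=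
      mul_nonneg (by linarith [neg_abs_le B]) (by linarith)
    have t2 : (0:ℝ) ≤ |C| * ((n:ℝ) - 1) :=
      mul_nonneg (abs_nonneg C) (by linarith)
    have t3 : (0:ℝ) ≤ (ms / 2 * (n:ℝ) - (|B| + |C|)) * n :=
      mul_nonneg (by linarith [hx3]) (by linarith)
    have t4 := neg_abs_le C
    clear_value N B C p
    have hD : (0:ℝ) ≤ (ms / 2) * (n:ℝ)^2 + B * (n:ℝ) + C := by nlinarith [t1, t2, t3, t4]
    linarith [key, hD]
  have hmono : ∀ n : ℕ, N ≤ n →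
      a (n + 1) * ((n:ℝ) + 2) ^ p ≤ a n * ((n:ℝ) + 1) ^ p := by
    intro n hn
    have h1 : (0:ℝ) < 2 * m + n := by positivity
    have h2 : (0:ℝ) < m + n := by positivity
    have hd1 : (0:ℝ) < (2 * m + n + 2 * ms) * (m + n + 1) := by positivity
    have hn2 : (0:ℝ) < (n:ℝ) + 2 := by positivity
    -- Bernoulli lower bound
    have hs : (-1:ℝ) ≤ -(1 / ((n:ℝ) + 2)) := by
      have h : (1:ℝ) / ((n:ℝ) + 2) ≤ 1 := by
        rw [div_le_one hn2]; linarith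
      linarith
    have hb := one_add_mul_self_le_rpow_one_add hs hp1
    have e2 : (1:ℝ) + -(1 / ((n:ℝ) + 2)) = ((n:ℝ) + 1) / ((n:ℝ) + 2) := by
      field_simp
      ring
    have e3 : (1:ℝ) + p * -(1 / ((n:ℝ) + 2)) = ((n:ℝ) + 2 - p) / ((n:ℝ) + 2) := by
      field_simp
      ring
    rw [e2, e3] at hb
    have hr : ((2 * m + n) * (m + n + ms)) / ((2 * m + n + 2 * ms) * (m + n + 1)) ≤
        (((n:ℝ) + 1) / ((n:ℝ) + 2)) ^ p := by
      refine le_trans ?_ hb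
      rw [div_le_div_iff₀ hd1 hn2]
      linear_combination hN n hn
    have h2p : (0:ℝ) < ((n:ℝ) + 2) ^ p := Real.rpow_pos_of_pos hn2 p
    have hfin : ((2 * m + n) * (m + n + ms)) / ((2 * m + n + 2 * ms) * (m + n + 1)) *
        ((n:ℝ) + 2) ^ p ≤ ((n:ℝ) + 1) ^ p := by
      calc ((2 * m + n) * (m + n + ms)) / ((2 * m + n + 2 * ms) * (m + n + 1)) *
            ((n:ℝ) + 2) ^ p
          ≤ (((n:ℝ) + 1) / ((n:ℝ) + 2)) ^ p * ((n:ℝ) + 2) ^ p :=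
            mul_le_mul_of_nonneg_right hr h2p.le
        _ = ((n:ℝ) + 1) ^ p := by
            rw [Real.div_rpow (by positivity) hn2.le, div_mul_cancel₀ _ h2p.ne']
    calc a (n + 1) * ((n:ℝ) + 2) ^ p
        = a n * (((2 * m + n) * (m + n + ms)) / ((2 * m + n + 2 * ms) * (m + n + 1)) *
            ((n:ℝ) + 2) ^ p) := by rw [hrec n]; ring
      _ ≤ a n * ((n:ℝ) + 1) ^ p :=
          mul_le_mul_of_nonneg_left hfin (hpos n).le
  -- the sequence a n * (n+1)^p is antitone from N on
  have hc : ∀ k : ℕ, a (N + k) * (((N + k : ℕ):ℝ) + 1) ^ p ≤ a N * ((N:ℝ) + 1) ^ p := by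
    intro k
    induction k with
    | zero => simp
    | succ k ih =>
      have hstep := hmono (N + k) (Nat.le_add_right N k)
      have e : (((N + k + 1 : ℕ)):ℝ) + 1 = ((N + k : ℕ):ℝ) + 2 := by push_cast; ring
      have e' : N + (k + 1) = (N + k) + 1 := by omega
      rw [e', e]
      exact hstep.trans ih
  rw [← summable_nat_add_iff N]
  have hsum : Summable (fun k : ℕ => (a N * ((N:ℝ) + 1) ^ p) * (((k + N : ℕ):ℝ) + 1) ^ (-p)) := by
    apply Summable.mul_left
    have hbase : Summable (fun j : ℕ => (j:ℝ) ^ (-p)) := by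
      apply Real.summable_nat_rpow.mpr
      simp only [hpdef]; linarith
    have := (summable_nat_add_iff (N + 1)).mpr hbase
    refine this.congr fun k => ?_
    push_cast
    ring_nf
  refine Summable.of_nonneg_of_le (fun k => (hpos _).le) (fun k => ?_) hsum
  have hxpos : (0:ℝ) < ((k + N : ℕ):ℝ) + 1 := by positivity
  have hXp : (0:ℝ) < (((k + N : ℕ):ℝ) + 1) ^ p := Real.rpow_pos_of_pos hxpos p
  rw [Real.rpow_neg hxpos.le, ← div_eq_mul_inv, le_div_iff₀ hXp]
  calc a (k + N) * (((k + N : ℕ):ℝ) + 1) ^ p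
      = a (N + k) * (((N + k : ℕ):ℝ) + 1) ^ p := by rw [Nat.add_comm k N]
    _ ≤ a N * ((N:ℝ) + 1) ^ p := hc k
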